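/- Termination of the verification rules: for every program e in distilled form and every well-founded LTL formula φ, the computation of the verification procedure P applied to e, φ with empty function environment and empty memo set always terminates (P⟦e⟧ φ ∅ ∅ is well-defined and returns a value in TruthVal). -/

import Mathlib

/-- External events of the reactive systems considered. -/
inductive Event : Type where
  | request1 | request2 | take1 | take2 | release1 | release2
deriving DecidableEq

/-- A list of all external events (the patterns of an exhaustive case). -/
def Event.all : List Event :=
  [.request1, .request2, .take1, .take2, .release1, .release2]

/-- Three-valued Kleene truth values. -/
inductive TruthVal : Type where
  | true | false | undefined
deriving DecidableEq

def TruthVal.ofBool : Bool → TruthVal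
  | Bool.true => .true
  | Bool.false => .false

/-- Kleene conjunction. -/
def kand : TruthVal → TruthVal → TruthVal
  | .false, _ => .false
  | _, .false => .false
  | .true, .true => .true
  | _, _ => .undefined

/-- Kleene disjunction. -/
def kor : TruthVal → TruthVal → TruthVal
  | .true, _ => .true
  | _, .true => .true
  | .false, .false => .false
  | _, _ => .undefined

/-- Kleene negation. -/
def knot : TruthVal → TruthVal
  | .true => .false
  | .false => .true
  | .undefined => .undefined

/-- Kleene implication. -/
def kimp (a b : TruthVal) : TruthVal := kor (knot a) b

/-- Kleene disjunction of a list. -/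
def kdisj (l : List TruthVal) : TruthVal := l.foldr kor .false

/-- Kleene conjunction of a list. -/
def kconj (l : List TruthVal) : TruthVal := l.foldr kand .true

/-- LTL formulas over observable states of type `State`; atomic propositions are
boolean-valued predicates on the current state variable `s`. -/
inductive LTL (State : Type) : Type where
  | atom : (State → Bool) → LTL State
  | not : LTL State → LTL State
  | and : LTL State → LTL State → LTL State
  | or : LTL State → LTL State → LTL State
  | imp : LTL State → LTL State → LTL State
  | always : LTL State → LTL State          -- □
  | eventually : LTL State → LTL State      -- ◇
  | next : LTL State → LTL State            -- ○

/-- Standard LTL satisfaction over an infinite state sequence `π` at position `i`. -/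
def Sat {State : Type} (π : ℕ → State) : ℕ → LTL State → Prop
  | i, .atom p => p (π i) = Bool.true
  | i, .not φ => ¬ Sat π i φ
  | i, .and φ ψ => Sat π i φ ∧ Sat π i ψ
  | i, .or φ ψ => Sat π i φ ∨ Sat π i ψ
  | i, .imp φ ψ => Sat π i φ → Sat π i ψ
  | i, .always φ => ∀ j, i ≤ j → Sat π j φ
  | i, .eventually φ => ∃ j, i ≤ j ∧ Sat π j φ
  | i, .next φ => Sat π (i + 1) φ

/-- `φ` is an atom or the `next` of a formula ("other" formulas in rule (6c)). -/
def LTL.isNextOrAtom {State : Type} : LTL State → Prop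
  | .atom _ => True
  | .next _ => True
  | _ => False

/-- `φ` is an atom, an `always` or a `next` formula ("other" formulas in rule (7b)). -/
def LTL.isNotEventually {State : Type} : LTL State → Prop
  | .atom _ => True
  | .always _ => True
  | .next _ => True
  | _ => False

/-- `φ` is not a logical connective, i.e. an atom or a temporal formula. -/
def LTL.isBasic {State : Type} : LTL State → Prop
  | .atom _ => True
  | .always _ => True
  | .eventually _ => True
  | .next _ => True
  | _ => False

/-- Programs in distilled form `e^ρ` (Figure 5).  Such a program maps an input
stream of external events to an output stream of observable states of type `State`:
`cons e0 e1` outputs the state `e0` in front of the output of `e1`;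
`call f` is a call `f x1 … xn` of a where-defined function applied to variables;
`case_ b` is a case expression over the next external event, `x ∉ ρ`, with one
branch per event pattern;
`freeApp` is an application `x e1 … en` of a let-abstracted variable, `x ∈ ρ`;
`letE e0 e1` is `let x = λx1…xn.e0 in e1` with `x` added to `ρ` in `e1`;
`whereE e0 defs` is `e0 where f1 = λ….e1 … fn = λ….en`, where function names
are drawn from `ℕ`. -/
inductive DExpr (State : Type) : Type where
  | cons : State → DExpr State → DExpr State
  | call : ℕ → DExpr State
  | case_ : (Event → DExpr State) → DExpr State
  | freeApp : DExpr State
  | letE : DExpr State → DExpr State → DExpr State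
  | whereE : DExpr State → List (ℕ × DExpr State) → DExpr State

/-- A function variable environment. -/
def FnEnv (State : Type) : Type := ℕ → Option (DExpr State)

/-- The empty function environment. -/
def emptyEnv (State : Type) : FnEnv State := fun _ => none

/-- Extending a function environment with a list of local definitions. -/
def extendEnv {State : Type} (env : FnEnv State) (defs : List (ℕ × DExpr State)) :
    FnEnv State :=
  fun f => (defs.lookup f).orElse fun _ => env f

/-- The verification rules of Figure 6, as an inductively defined relation
`PRel F e φ env ρ v` meaning `P⟦e⟧ φ env ρ = v`, where `F` is the set of external
events carrying fairness assumptions and `ρ` is the memo set of previously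
encountered function calls. -/
inductive PRel {State : Type} (F : Event → Bool) :
    DExpr State → LTL State → FnEnv State → Set ℕ → TruthVal → Prop where
  /-- rule (1): Kleene conjunction -/
  | andR {e : DExpr State} {φ ψ : LTL State} {env : FnEnv State} {ρ : Set ℕ}
      {v1 v2 : TruthVal} :
      PRel F e φ env ρ v1 → PRel F e ψ env ρ v2 →
      PRel F e (.and φ ψ) env ρ (kand v1 v2)
  /-- rule (2): Kleene disjunction -/
  | orR {e : DExpr State} {φ ψ : LTL State} {env : FnEnv State} {ρ : Set ℕ}
      {v1 v2 : TruthVal} :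
      PRel F e φ env ρ v1 → PRel F e ψ env ρ v2 →
      PRel F e (.or φ ψ) env ρ (kor v1 v2)
  /-- rule (3): Kleene implication -/
  | impR {e : DExpr State} {φ ψ : LTL State} {env : FnEnv State} {ρ : Set ℕ}
      {v1 v2 : TruthVal} :
      PRel F e φ env ρ v1 → PRel F e ψ env ρ v2 →
      PRel F e (.imp φ ψ) env ρ (kimp v1 v2)
  /-- rule (4): Kleene negation -/
  | notR {e : DExpr State} {φ : LTL State} {env : FnEnv State} {ρ : Set ℕ}
      {v : TruthVal} :
      PRel F e φ env ρ v → PRel F e (.not φ) env ρ (knot v)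
  /-- rule (5a): `□φ` on a constructed stream, with `ρ` reset to `∅` inside `□` -/
  | consAlways {s : State} {e1 : DExpr State} {φ : LTL State} {env : FnEnv State}
      {ρ : Set ℕ} {v1 v2 : TruthVal} :
      PRel F (.cons s e1) φ env ∅ v1 → PRel F e1 (.always φ) env ρ v2 →
      PRel F (.cons s e1) (.always φ) env ρ (kand v1 v2)
  /-- rule (5b): `◇φ` on a constructed stream, with `ρ` reset to `∅` inside `◇` -/
  | consEventually {s : State} {e1 : DExpr State} {φ : LTL State} {env : FnEnv State}
      {ρ : Set ℕ} {v1 v2 : TruthVal} :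
      PRel F (.cons s e1) φ env ∅ v1 → PRel F e1 (.eventually φ) env ρ v2 →
      PRel F (.cons s e1) (.eventually φ) env ρ (kor v1 v2)
  /-- rule (5c): `○φ` on a constructed stream -/
  | consNext {s : State} {e1 : DExpr State} {φ : LTL State} {env : FnEnv State}
      {ρ : Set ℕ} {v : TruthVal} :
      PRel F e1 φ env ρ v → PRel F (.cons s e1) (.next φ) env ρ v
  /-- rule (5d): an atomic property is evaluated on the current head state -/
  | consAtom {s : State} {e1 : DExpr State} {p : State → Bool} {env : FnEnv State}
      {ρ : Set ℕ} :
      PRel F (.cons s e1) (.atom p) env ρ (TruthVal.ofBool (p s))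
  /-- rule (6a), `f ∈ ρ`: greatest fixed point, return `True` -/
  | callAlwaysHit {f : ℕ} {φ : LTL State} {env : FnEnv State} {ρ : Set ℕ} :
      f ∈ ρ → PRel F (.call f) (.always φ) env ρ .true
  /-- rule (6a), `f ∉ ρ`: unfold `f`, adding it to `ρ` -/
  | callAlwaysMiss {f : ℕ} {e : DExpr State} {φ : LTL State} {env : FnEnv State}
      {ρ : Set ℕ} {v : TruthVal} :
      f ∉ ρ → env f = some e → PRel F e (.always φ) env (ρ ∪ {f}) v →
      PRel F (.call f) (.always φ) env ρ v
  /-- rule (6b), `f ∈ ρ`: least fixed point, return `False` -/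
  | callEventuallyHit {f : ℕ} {φ : LTL State} {env : FnEnv State} {ρ : Set ℕ} :
      f ∈ ρ → PRel F (.call f) (.eventually φ) env ρ .false
  /-- rule (6b), `f ∉ ρ`: unfold `f`, adding it to `ρ` -/
  | callEventuallyMiss {f : ℕ} {e : DExpr State} {φ : LTL State} {env : FnEnv State}
      {ρ : Set ℕ} {v : TruthVal} :
      f ∉ ρ → env f = some e → PRel F e (.eventually φ) env (ρ ∪ {f}) v →
      PRel F (.call f) (.eventually φ) env ρ v
  /-- rule (6c), `f ∈ ρ`: a loop is detected, return `Undefined` -/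
  | callOtherHit {f : ℕ} {φ : LTL State} {env : FnEnv State} {ρ : Set ℕ} :
      φ.isNextOrAtom → f ∈ ρ → PRel F (.call f) φ env ρ .undefined
  /-- rule (6c), `f ∉ ρ`: unfold `f`, adding it to `ρ` -/
  | callOtherMiss {f : ℕ} {e : DExpr State} {φ : LTL State} {env : FnEnv State}
      {ρ : Set ℕ} {v : TruthVal} :
      φ.isNextOrAtom → f ∉ ρ → env f = some e → PRel F e φ env (ρ ∪ {f}) v →
      PRel F (.call f) φ env ρ v
  /-- rule (7a): `◇φ` on a case expression: the disjunction over the branches whose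
  pattern event lies in `F`, or the conjunction over all branches -/
  | caseEventually {b : Event → DExpr State} {φ : LTL State} {env : FnEnv State}
      {ρ : Set ℕ} {v : Event → TruthVal} :
      (∀ ev : Event, PRel F (b ev) (.eventually φ) env ρ (v ev)) →
      PRel F (.case_ b) (.eventually φ) env ρ
        (kor (kdisj ((Event.all.filter F).map v)) (kconj (Event.all.map v)))
  /-- rule (7b): any other property on a case expression: conjunction over all branches -/
  | caseOther {b : Event → DExpr State} {φ : LTL State} {env : FnEnv State}
      {ρ : Set ℕ} {v : Event → TruthVal} :
      φ.isNotEventually →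
      (∀ ev : Event, PRel F (b ev) φ env ρ (v ev)) →
      PRel F (.case_ b) φ env ρ (kconj (Event.all.map v))
  /-- rule (8): the application of a free (let-abstracted) variable is `Undefined` -/
  | freeAppR {φ : LTL State} {env : FnEnv State} {ρ : Set ℕ} :
      φ.isBasic → PRel F .freeApp φ env ρ .undefined
  /-- rule (9): a let expression is verified on its body (abstraction) -/
  | letR {e0 e1 : DExpr State} {φ : LTL State} {env : FnEnv State} {ρ : Set ℕ}
      {v : TruthVal} :
      φ.isBasic → PRel F e1 φ env ρ v → PRel F (.letE e0 e1) φ env ρ v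
  /-- rule (10): a where expression extends the function environment -/
  | whereR {e0 : DExpr State} {defs : List (ℕ × DExpr State)} {φ : LTL State}
      {env : FnEnv State} {ρ : Set ℕ} {v : TruthVal} :
      φ.isBasic → PRel F e0 φ (extendEnv env defs) ρ v →
      PRel F (.whereE e0 defs) φ env ρ v

/-- `WellScoped e Δ` : every function call in the distilled program `e` is to a
where-defined function (whose name lies in scope `Δ`), as required by the grammar
of distilled form, with finitely many where-defined functions. -/
inductive WellScoped {State : Type} : DExpr State → Set ℕ → Prop where
  | cons {s : State} {e1 : DExpr State} {Δ : Set ℕ} :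
      WellScoped e1 Δ → WellScoped (.cons s e1) Δ
  | call {f : ℕ} {Δ : Set ℕ} : f ∈ Δ → WellScoped (.call f) Δ
  | case_ {b : Event → DExpr State} {Δ : Set ℕ} :
      (∀ ev : Event, WellScoped (b ev) Δ) → WellScoped (.case_ b) Δ
  | freeApp {Δ : Set ℕ} : WellScoped .freeApp Δ
  | letE {e0 e1 : DExpr State} {Δ : Set ℕ} :
      WellScoped e0 Δ → WellScoped e1 Δ → WellScoped (.letE e0 e1) Δ
  | whereE {e0 : DExpr State} {defs : List (ℕ × DExpr State)} {Δ : Set ℕ} :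
      WellScoped e0 (Δ ∪ {f | f ∈ defs.map Prod.fst}) →
      (∀ d ∈ defs, WellScoped d.2 (Δ ∪ {f | f ∈ defs.map Prod.fst})) →
      WellScoped (.whereE e0 defs) Δ

/-!
Termination follows from a lexicographic measure. Formulas shrink whenever a rule
recurses into a subformula, and this is the only place where the memo set is reset.
For a fixed formula, the memo set only grows, at a call `f x1 … xn` with `f` not yet
memoized, and all function names that can ever be memoized are the finitely many
names bound by `where`-expressions of the program; every other rule recurses into a
proper subexpression. So the lexicographic triple (formula, number of unmemoized
function names, expression size) decreases with every rule application.
-/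

section Termination

variable {State : Type}

namespace DExpr

/-- The bodies of `where`-definitions are not counted: verification reaches them only
through a call, which grows the memo set. -/
def size : DExpr State → ℕ
  | .cons _ e1 => e1.size + 1
  | .call _ => 1
  | .case_ b => (b .request1).size + (b .request2).size + (b .take1).size
      + (b .take2).size + (b .release1).size + (b .release2).size + 1
  | .freeApp => 1
  | .letE e0 e1 => e0.size + e1.size + 1
  | .whereE e0 _ => e0.size + 1

lemma size_branch_lt_size_case (b : Event → DExpr State) (ev : Event) :
    (b ev).size < (DExpr.case_ b).size := by
  cases ev <;> simp only [size] <;> omega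

mutual
/-- The function names bound by the `where`-expressions occurring anywhere in `e`. -/
def boundNames : DExpr State → Finset ℕ
  | .cons _ e1 => boundNames e1
  | .call _ => ∅
  | .case_ b => boundNames (b .request1) ∪ boundNames (b .request2) ∪ boundNames (b .take1)
      ∪ boundNames (b .take2) ∪ boundNames (b .release1) ∪ boundNames (b .release2)
  | .freeApp => ∅
  | .letE e0 e1 => boundNames e0 ∪ boundNames e1
  | .whereE e0 defs => boundNames e0 ∪ (defs.map Prod.fst).toFinset ∪ boundNamesList defs

def boundNamesList : List (ℕ × DExpr State) → Finset ℕ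
  | [] => ∅
  | d :: ds => boundNames d.2 ∪ boundNamesList ds
end

lemma boundNames_branch_subset (b : Event → DExpr State) (ev : Event) :
    (b ev).boundNames ⊆ (DExpr.case_ b).boundNames := by
  cases ev <;> intro x hx <;> simp only [boundNames, Finset.mem_union] at * <;> tauto

lemma boundNames_subset_boundNamesList {defs : List (ℕ × DExpr State)}
    {d : ℕ × DExpr State} (hd : d ∈ defs) : d.2.boundNames ⊆ boundNamesList defs := by
  induction defs with
  | nil => simp at hd
  | cons a as ih =>
    rw [boundNamesList]
    rcases List.mem_cons.mp hd with rfl | hd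
    · exact Finset.subset_union_left
    · exact (ih hd).trans Finset.subset_union_right

end DExpr

lemma List.lookup_isSome_of_mem_map_fst {α β : Type*} [BEq α] [LawfulBEq α]
    {l : List (α × β)} {a : α} (h : a ∈ l.map Prod.fst) : (l.lookup a).isSome := by
  induction l with
  | nil => simp at h
  | cons d ds ih =>
    by_cases ha : a = d.1
    · simp [List.lookup, ha]
    · simp_all [List.lookup, beq_false_of_ne ha]

lemma List.mem_of_lookup_eq_some {α β : Type*} [BEq α] [LawfulBEq α]
    {l : List (α × β)} {a : α} {b : β} (h : l.lookup a = some b) : (a, b) ∈ l := by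
  induction l with
  | nil => simp [List.lookup] at h
  | cons d ds ih =>
    obtain ⟨c, d⟩ := d
    by_cases ha : a = c
    · simp_all [List.lookup]
    · simp_all [List.lookup, beq_false_of_ne ha]

lemma Finset.card_sdiff_insert_lt {α : Type*} [DecidableEq α] {N ρ : Finset α} {f : α}
    (hfN : f ∈ N) (hfρ : f ∉ ρ) : (N \ insert f ρ).card < (N \ ρ).card :=
  Finset.card_lt_card <| (Finset.ssubset_iff_of_subset
    (Finset.sdiff_subset_sdiff le_rfl (Finset.subset_insert _ _))).2 ⟨f, by simp [hfN, hfρ]⟩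

namespace FnEnv

def dom (env : FnEnv State) : Set ℕ := {f | ∃ e, env f = some e}

lemma dom_union_subset_dom_extendEnv (env : FnEnv State) (defs : List (ℕ × DExpr State)) :
    env.dom ∪ {f | f ∈ defs.map Prod.fst} ⊆ (extendEnv env defs).dom := by
  rintro f (⟨e, he⟩ | hf)
  · cases hl : defs.lookup f with
    | none => exact ⟨e, by simp [extendEnv, hl, he]⟩
    | some e' => exact ⟨e', by simp [extendEnv, hl]⟩
  · obtain ⟨e', he'⟩ := Option.isSome_iff_exists.mp (List.lookup_isSome_of_mem_map_fst hf)
    exact ⟨e', by simp [extendEnv, he']⟩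

end FnEnv

lemma WellScoped.mono {e : DExpr State} {Δ Δ' : Set ℕ} (h : WellScoped e Δ) (hΔ : Δ ⊆ Δ') :
    WellScoped e Δ' := by
  induction h generalizing Δ' with
  | cons _ ih => exact .cons (ih hΔ)
  | call hf => exact .call (hΔ hf)
  | case_ _ ih => exact .case_ fun ev => ih ev hΔ
  | freeApp => exact .freeApp
  | letE _ _ ih0 ih1 => exact .letE (ih0 hΔ) (ih1 hΔ)
  | whereE _ _ ih0 ihd =>
    exact .whereE (ih0 (Set.union_subset_union_left _ hΔ))
      (fun d hd => ihd d hd (Set.union_subset_union_left _ hΔ))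

/-- The invariant of the verification: every name that may enter the memo set
lies in `N`, for `e` as well as for every function body reachable through `env`. -/
structure Admissible (N : Finset ℕ) (env : FnEnv State) (e : DExpr State) : Prop where
  boundNames_subset : e.boundNames ⊆ N
  wellScoped : WellScoped e env.dom
  env_body : ∀ f body, env f = some body →
    f ∈ N ∧ body.boundNames ⊆ N ∧ WellScoped body env.dom

namespace Admissible

variable {N : Finset ℕ} {env : FnEnv State}

lemma of_body {e body : DExpr State} {f : ℕ} (h : Admissible N env e)
    (hf : env f = some body) : f ∈ N ∧ Admissible N env body :=
  have ⟨hfN, hN, hws⟩ := h.env_body f body hf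
  ⟨hfN, hN, hws, h.env_body⟩

lemma of_cons {s : State} {e1 : DExpr State} (h : Admissible N env (.cons s e1)) :
    Admissible N env e1 := by
  obtain ⟨hN, hws, henv⟩ := h
  cases hws with | cons hws => exact ⟨hN, hws, henv⟩

lemma of_case {b : Event → DExpr State} (h : Admissible N env (.case_ b)) (ev : Event) :
    Admissible N env (b ev) := by
  obtain ⟨hN, hws, henv⟩ := h
  cases hws with
  | case_ hws => exact ⟨(DExpr.boundNames_branch_subset b ev).trans hN, hws ev, henv⟩

lemma of_letE {e0 e1 : DExpr State} (h : Admissible N env (.letE e0 e1)) :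
    Admissible N env e1 := by
  obtain ⟨hN, hws, henv⟩ := h
  cases hws with | letE _ hws => exact ⟨Finset.subset_union_right.trans hN, hws, henv⟩

lemma of_whereE {e0 : DExpr State} {defs : List (ℕ × DExpr State)}
    (h : Admissible N env (.whereE e0 defs)) : Admissible N (extendEnv env defs) e0 := by
  obtain ⟨hN, hws, henv⟩ := h
  cases hws with | whereE hws0 hwsd => ?_
  simp only [DExpr.boundNames, Finset.union_subset_iff] at hN
  obtain ⟨⟨hN0, hkeys⟩, hbodies⟩ := hN
  have hdom := FnEnv.dom_union_subset_dom_extendEnv env defs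
  refine ⟨hN0, hws0.mono hdom, fun f body hf => ?_⟩
  cases hl : defs.lookup f with
  | none =>
    obtain ⟨hfN, hbN, hws⟩ := henv f body (by simpa [extendEnv, hl] using hf)
    exact ⟨hfN, hbN, hws.mono (Set.subset_union_left.trans hdom)⟩
  | some body' =>
    obtain rfl : body' = body := by simpa [extendEnv, hl] using hf
    have hmem := List.mem_of_lookup_eq_some hl
    exact ⟨hkeys (List.mem_toFinset.mpr (List.mem_map_of_mem (f := Prod.fst) hmem)),
      (DExpr.boundNames_subset_boundNamesList hmem).trans hbodies,
      (hwsd _ hmem).mono hdom⟩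

end Admissible

namespace PRel

variable {F : Event → Bool} {env : FnEnv State} {ρ : Set ℕ} {φ : LTL State}

lemma exists_call_of_mem (hφ : φ.isBasic) {f : ℕ} (hf : f ∈ ρ) :
    ∃ v, PRel F (.call f) φ env ρ v := by
  cases φ with
  | atom => exact ⟨_, .callOtherHit trivial hf⟩
  | next => exact ⟨_, .callOtherHit trivial hf⟩
  | always => exact ⟨_, .callAlwaysHit hf⟩
  | eventually => exact ⟨_, .callEventuallyHit hf⟩
  | _ => exact hφ.elim

lemma call_of_not_mem (hφ : φ.isBasic) {f : ℕ} {body : DExpr State} {v : TruthVal}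
    (hf : f ∉ ρ) (hbody : env f = some body) (h : PRel F body φ env (ρ ∪ {f}) v) :
    PRel F (.call f) φ env ρ v := by
  cases φ with
  | atom => exact .callOtherMiss trivial hf hbody h
  | next => exact .callOtherMiss trivial hf hbody h
  | always => exact .callAlwaysMiss hf hbody h
  | eventually => exact .callEventuallyMiss hf hbody h
  | _ => exact hφ.elim

lemma exists_case (hφ : φ.isBasic) {b : Event → DExpr State} {v : Event → TruthVal}
    (h : ∀ ev, PRel F (b ev) φ env ρ (v ev)) : ∃ v, PRel F (.case_ b) φ env ρ v := by
  cases φ with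
  | atom => exact ⟨_, .caseOther trivial h⟩
  | next => exact ⟨_, .caseOther trivial h⟩
  | always => exact ⟨_, .caseOther trivial h⟩
  | eventually => exact ⟨_, .caseEventually h⟩
  | _ => exact hφ.elim

def TotalOn (F : Event → Bool) (N : Finset ℕ) (φ : LTL State) : Prop :=
  ∀ (ρ : Finset ℕ) (env : FnEnv State) (e : DExpr State),
    ρ ⊆ N → Admissible N env e → ∃ v, PRel F e φ env ρ v

/-- For a basic formula only the rule for `cons` depends on the shape of `φ`; `hcons`
supplies it, given the value on the tail. -/
theorem totalOn_of_isBasic {N : Finset ℕ} (hφ : φ.isBasic)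
    (hcons : ∀ (ρ : Finset ℕ) (env : FnEnv State) (s : State) (e1 : DExpr State),
      ρ ⊆ N → Admissible N env (.cons s e1) →
      (∃ v, PRel F e1 φ env ρ v) → ∃ v, PRel F (.cons s e1) φ env ρ v) :
    TotalOn F N φ := by
  intro ρ env e hρ he
  match e with
  | .cons s e1 =>
    exact hcons ρ env s e1 hρ he (totalOn_of_isBasic hφ hcons ρ env e1 hρ he.of_cons)
  | .call f =>
    have ⟨body, hbody⟩ : ∃ body, env f = some body := by
      cases he.wellScoped with | call hf => exact hf
    by_cases hf : f ∈ ρ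
    · exact exists_call_of_mem hφ (Finset.mem_coe.mpr hf)
    · have ⟨hfN, hadm⟩ := he.of_body hbody
      obtain ⟨v, hv⟩ := totalOn_of_isBasic hφ hcons (insert f ρ) env body
        (Finset.insert_subset hfN hρ) hadm
      refine ⟨v, call_of_not_mem hφ (by simpa using hf) hbody ?_⟩
      simpa [Set.union_singleton] using hv
  | .case_ b =>
    choose v hv using fun ev => totalOn_of_isBasic hφ hcons ρ env (b ev) hρ (he.of_case ev)
    exact exists_case hφ hv
  | .freeApp => exact ⟨_, .freeAppR hφ⟩
  | .letE e0 e1 =>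
    obtain ⟨v, hv⟩ := totalOn_of_isBasic hφ hcons ρ env e1 hρ he.of_letE
    exact ⟨v, .letR hφ hv⟩
  | .whereE e0 defs =>
    obtain ⟨v, hv⟩ := totalOn_of_isBasic hφ hcons ρ _ e0 hρ he.of_whereE
    exact ⟨v, .whereR hφ hv⟩
termination_by ρ _ e => ((N \ ρ).card, e.size)
decreasing_by
  all_goals first
    | exact Prod.Lex.left _ _ (Finset.card_sdiff_insert_lt hfN hf)
    | exact Prod.Lex.right _ (by simp only [DExpr.size]; omega)
    | exact Prod.Lex.right _ (DExpr.size_branch_lt_size_case _ _)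

theorem totalOn {N : Finset ℕ} : TotalOn F N φ := by
  induction φ with
  | atom p => exact totalOn_of_isBasic trivial fun _ _ _ _ _ _ _ => ⟨_, .consAtom⟩
  | next φ ih =>
    refine totalOn_of_isBasic trivial fun ρ env s e1 hρ he _ => ?_
    obtain ⟨v, hv⟩ := ih ρ env e1 hρ he.of_cons
    exact ⟨v, .consNext hv⟩
  | always φ ih =>
    refine totalOn_of_isBasic trivial fun ρ env s e1 hρ he ⟨v, hv⟩ => ?_
    obtain ⟨v₀, hv₀⟩ := ih ∅ env _ (Finset.empty_subset N) he
    exact ⟨_, .consAlways (by simpa using hv₀) hv⟩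
  | eventually φ ih =>
    refine totalOn_of_isBasic trivial fun ρ env s e1 hρ he ⟨v, hv⟩ => ?_
    obtain ⟨v₀, hv₀⟩ := ih ∅ env _ (Finset.empty_subset N) he
    exact ⟨_, .consEventually (by simpa using hv₀) hv⟩
  | not φ ih =>
    intro ρ env e hρ he
    obtain ⟨v, hv⟩ := ih ρ env e hρ he
    exact ⟨_, .notR hv⟩
  | and φ ψ ihφ ihψ =>
    intro ρ env e hρ he
    obtain ⟨v, hv⟩ := ihφ ρ env e hρ he
    obtain ⟨w, hw⟩ := ihψ ρ env e hρ he
    exact ⟨_, .andR hv hw⟩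
  | or φ ψ ihφ ihψ =>
    intro ρ env e hρ he
    obtain ⟨v, hv⟩ := ihφ ρ env e hρ he
    obtain ⟨w, hw⟩ := ihψ ρ env e hρ he
    exact ⟨_, .orR hv hw⟩
  | imp φ ψ ihφ ihψ =>
    intro ρ env e hρ he
    obtain ⟨v, hv⟩ := ihφ ρ env e hρ he
    obtain ⟨w, hw⟩ := ihψ ρ env e hρ he
    exact ⟨_, .impR hv hw⟩

end PRel

end Termination

/-- Termination of the verification rules: for every program `e` in distilled form
and every well-founded LTL formula `φ`, the computation of `P⟦e⟧ φ ∅ ∅` always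
terminates, i.e. it is well-defined and returns a value in `TruthVal`. -/
theorem verification_termination {State : Type} (F : Event → Bool)
    (e : DExpr State) (φ : LTL State) (he : WellScoped e ∅) :
    ∃ v : TruthVal, PRel F e φ (emptyEnv State) ∅ v := by
  have hadm : Admissible e.boundNames (emptyEnv State) e :=
    ⟨subset_rfl, he.mono (Set.empty_subset _), fun _ _ h => nomatch h⟩
  simpa using PRel.totalOn (F := F) (φ := φ) ∅ (emptyEnv State) e (Finset.empty_subset _) hadm
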